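/- Let (G,𝓑) be a biased graph whose underlying graph G is a complete bipartite graph. If every circuit of G with exactly 4 vertices is balanced, then every circuit of G is balanced. -/

import Mathlib

open SimpleGraph

namespace Paper

variable {V : Type*}

/-- The edge set of a walk, as a set of edges. -/
def walkEdges {G : SimpleGraph V} {x y : V} (p : G.Walk x y) : Set (Sym2 V) :=
  {e | e ∈ p.edges}

/-- `C` is a circuit of `G`, i.e. the edge set of a cycle of `G`. -/
def IsCircuit (G : SimpleGraph V) (C : Set (Sym2 V)) : Prop :=
  ∃ (v : V) (w : G.Walk v v), w.IsCycle ∧ C = walkEdges w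

/-- The set of vertices covered by a set of edges. -/
def circVerts (C : Set (Sym2 V)) : Set V := {v | ∃ e ∈ C, v ∈ e}

/-- An edge set is nonspanning if it misses some vertex. -/
def Nonspanning (C : Set (Sym2 V)) : Prop := circVerts C ≠ Set.univ

/-- Three pairwise edge-disjoint and internally vertex-disjoint `x`-`y` paths,
forming a theta subgraph. -/
def IsThetaConfig (G : SimpleGraph V) {x y : V} (p₁ p₂ p₃ : G.Walk x y) : Prop :=
  x ≠ y ∧ p₁.IsPath ∧ p₂.IsPath ∧ p₃.IsPath ∧
  (∀ e, e ∈ p₁.edges → e ∉ p₂.edges) ∧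
  (∀ e, e ∈ p₁.edges → e ∉ p₃.edges) ∧
  (∀ e, e ∈ p₂.edges → e ∉ p₃.edges) ∧
  (∀ v, v ∈ p₁.support → v ∈ p₂.support → v = x ∨ v = y) ∧
  (∀ v, v ∈ p₁.support → v ∈ p₃.support → v = x ∨ v = y) ∧
  (∀ v, v ∈ p₂.support → v ∈ p₃.support → v = x ∨ v = y)

/-- No theta subgraph of `G` contains exactly two circuits of `B`: the three
circuits of a theta subgraph are the unions of pairs of its three paths. -/
def ThetaProperty (G : SimpleGraph V) (B : Set (Set (Sym2 V))) : Prop :=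
  ∀ ⦃x y : V⦄ (p₁ p₂ p₃ : G.Walk x y), IsThetaConfig G p₁ p₂ p₃ →
    ¬ ((walkEdges p₁ ∪ walkEdges p₂ ∈ B ∧ walkEdges p₁ ∪ walkEdges p₃ ∈ B ∧
          walkEdges p₂ ∪ walkEdges p₃ ∉ B) ∨
       (walkEdges p₁ ∪ walkEdges p₂ ∈ B ∧ walkEdges p₁ ∪ walkEdges p₃ ∉ B ∧
          walkEdges p₂ ∪ walkEdges p₃ ∈ B) ∨
       (walkEdges p₁ ∪ walkEdges p₂ ∉ B ∧ walkEdges p₁ ∪ walkEdges p₃ ∈ B ∧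
          walkEdges p₂ ∪ walkEdges p₃ ∈ B))

/-- `(G, B)` is a biased graph. -/
def IsBiased (G : SimpleGraph V) (B : Set (Set (Sym2 V))) : Prop :=
  (∀ C ∈ B, IsCircuit G C) ∧ ThetaProperty G B

/-- The subgraph of `G` induced on the vertex set `X` (kept on the same vertex type). -/
def inducedOn (G : SimpleGraph V) (X : Set V) : SimpleGraph V where
  Adj u v := G.Adj u v ∧ u ∈ X ∧ v ∈ X
  symm := ⟨fun u v h => ⟨h.1.symm, h.2.2, h.2.1⟩⟩
  loopless := ⟨fun u h => G.loopless.irrefl u h.1⟩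

/-- The gain of a walk with respect to a gain function `γ` (an antisymmetric
function recording an orientation together with a group labelling). -/
def walkGain {Γ : Type*} [Group Γ] (γ : V → V → Γ) {G : SimpleGraph V}
    {x y : V} (p : G.Walk x y) : Γ :=
  (p.darts.map fun d => γ d.toProd.1 d.toProd.2).prod

/-- `(G, B)` arises from a `Γ`-labelled graph: some orientation and `Γ`-labelling of `G`
(encoded as an antisymmetric gain function) whose balanced circuits are exactly `B`. -/
def ArisesFrom (G : SimpleGraph V) (B : Set (Set (Sym2 V))) (Γ : Type*) [Group Γ] : Prop :=
  ∃ γ : V → V → Γ, (∀ u v, γ u v * γ v u = 1) ∧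
    ∀ (v : V) (w : G.Walk v v), w.IsCycle → (walkEdges w ∈ B ↔ walkGain γ w = 1)

/-- `(G, B)` arises from a `Γ`-labelled graph for some finite cyclic group `Γ`. -/
def ArisesFromFiniteCyclic (G : SimpleGraph V) (B : Set (Set (Sym2 V))) : Prop :=
  ∃ (Γ : Type) (instΓ : Group Γ), Finite Γ ∧ (letI := instΓ; IsCyclic Γ ∧ ArisesFrom G B Γ)

/-- The edge set of the cycle visiting the entries of the list `L` in cyclic order. -/
def cycEdges (L : List V) : Set (Sym2 V) :=
  {e | ∃ i : Fin L.length,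
    e = s(L.get i, L.get ⟨(i.val + 1) % L.length, Nat.mod_lt _ i.pos⟩)}

section Ordered

variable [LinearOrder V]

/-- The edge set `{v₁v₂, v₂v₃, v₃v₄, v₄v₁}` of a 4-circuit. -/
def Circ4 (v₁ v₂ v₃ v₄ : V) : Set (Sym2 V) := {s(v₁, v₂), s(v₂, v₃), s(v₃, v₄), s(v₄, v₁)}

/-- A 1324-circuit: the canonical ordering `v₁,v₂,v₃,v₄` satisfies `v₁<v₃<v₂<v₄`. -/
def Is1324 (C : Set (Sym2 V)) : Prop :=
  ∃ v₁ v₂ v₃ v₄ : V, v₁ < v₃ ∧ v₃ < v₂ ∧ v₂ < v₄ ∧ C = Circ4 v₁ v₂ v₃ v₄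

/-- A 1243-circuit: the canonical ordering `v₁,v₂,v₃,v₄` satisfies `v₁<v₂<v₄<v₃`. -/
def Is1243 (C : Set (Sym2 V)) : Prop :=
  ∃ v₁ v₂ v₃ v₄ : V, v₁ < v₂ ∧ v₂ < v₄ ∧ v₄ < v₃ ∧ C = Circ4 v₁ v₂ v₃ v₄

/-- A circuit is oscillating if every vertex is either below both of its neighbours
in the circuit or above both of them. -/
def Oscillating (C : Set (Sym2 V)) : Prop :=
  ∀ ⦃v a b : V⦄, s(v, a) ∈ C → s(v, b) ∈ C → a ≠ b → (v < a ∧ v < b) ∨ (a < v ∧ b < v)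

/-- The number of increasing steps of a walk minus the number of decreasing steps;
for a cycle walk `w` this is `δ₀` of the corresponding circuit, and `(walkDelta w).natAbs`
is the parameter `δ`. -/
def walkDelta {G : SimpleGraph V} {x y : V} (p : G.Walk x y) : ℤ :=
  ((p.darts.filter fun d => d.toProd.1 < d.toProd.2).length : ℤ) -
  ((p.darts.filter fun d => d.toProd.2 < d.toProd.1).length : ℤ)

/-- The gain of a walk with respect to the edge labelling `γ` and the orientation of
the complete graph in which each edge is oriented from its smaller end to its larger end. -/
def upGain {Γ : Type*} [Group Γ] (γ : Sym2 V → Γ) {G : SimpleGraph V}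
    {x y : V} (p : G.Walk x y) : Γ :=
  (p.darts.map fun d =>
    if d.toProd.1 < d.toProd.2 then γ s(d.toProd.1, d.toProd.2)
    else (γ s(d.toProd.1, d.toProd.2))⁻¹).prod

/-- `T` is the edge set of a theta subgraph of `G`. -/
def IsTheta (G : SimpleGraph V) (T : Set (Sym2 V)) : Prop :=
  ∃ (x y : V) (p₁ p₂ p₃ : G.Walk x y), IsThetaConfig G p₁ p₂ p₃ ∧
    T = walkEdges p₁ ∪ walkEdges p₂ ∪ walkEdges p₃

/-- Adjacency in the graph `Ω(G)`: a theta subgraph contains both circuits together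
with a 1243- or 1324-circuit. -/
def OmegaAdj (G : SimpleGraph V) (C₁ C₂ : Set (Sym2 V)) : Prop :=
  C₁ ≠ C₂ ∧ ∃ T, IsTheta G T ∧ C₁ ⊆ T ∧ C₂ ⊆ T ∧ ∃ D, (Is1243 D ∨ Is1324 D) ∧ D ⊆ T

/-- The graph `Ω(G)` on the nonspanning circuits of `G`. -/
def Omega (G : SimpleGraph V) :
    SimpleGraph {C : Set (Sym2 V) // IsCircuit G C ∧ Nonspanning C} where
  Adj C₁ C₂ := OmegaAdj G C₁.1 C₂.1
  symm := by
    refine ⟨?_⟩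
    rintro C₁ C₂ ⟨hne, T, hT, h1, h2, hD⟩
    exact ⟨hne.symm, T, hT, h2, h1, hD⟩
  loopless := by
    refine ⟨?_⟩
    rintro C ⟨hne, -⟩
    exact hne rfl

/-- Two circuits are similar if the order-preserving bijection between their vertex
sets carries one to the other. -/
def Similar (C₁ C₂ : Set (Sym2 V)) : Prop :=
  ∃ φ : V → V, Set.BijOn φ (circVerts C₁) (circVerts C₂) ∧
    StrictMonoOn φ (circVerts C₁) ∧ C₂ = Sym2.map φ '' C₁

end Ordered

/-- The 4-uniform Ramsey property for `N` with target sizes `a, b, c, d`. -/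
def HasRamsey4 (N a b c d : ℕ) : Prop :=
  ∀ χ : Finset (Fin N) → Fin 4, ∃ (i : Fin 4) (X : Finset (Fin N)),
    X.card = ![a, b, c, d] i ∧ ∀ Q ⊆ X, Q.card = 4 → χ Q = i

/-- The 4-colour Ramsey number for 4-uniform hypergraphs. -/
noncomputable def R4 (a b c d : ℕ) : ℕ := sInf {N | HasRamsey4 N a b c d}

end Paper

/-!
Induction on the length of a cycle. Cycles of a bipartite graph are even, so a cycle that is
not a 4-cycle has length at least 6. Its first three edges form a path of odd length between
two vertices `x` and `y`, which are therefore adjacent in the complete bipartite graph: `xy` is a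
chord. The cycle together with the chord is a theta subgraph whose other two circuits are a
4-circuit and a shorter circuit, both balanced, so the theta property makes the cycle balanced.
-/

namespace SimpleGraph.Walk

variable {V : Type*} {G : SimpleGraph V} {u v : V} {p : G.Walk v u} {q : G.Walk u v}

lemma IsPath.notMem_edges_of_two_le_length {x y : V} {r : G.Walk x y} (hr : r.IsPath)
    (hlen : 2 ≤ r.length) : s(x, y) ∉ r.edges := fun he => by
  have := hr.length_eq_one_of_mem_edges he
  omega

lemma IsCycle.isPath_append_left (hc : (p.append q).IsCycle) (hq : 2 ≤ q.length) : p.IsPath :=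
  hc.isPath_of_append_left (not_nil_iff_lt_length.2 (by omega))

lemma IsCycle.isPath_append_right (hc : (p.append q).IsCycle) (hp : 2 ≤ p.length) : q.IsPath :=
  hc.isPath_of_append_right (not_nil_iff_lt_length.2 (by omega))

lemma IsCycle.isCycle_cons_chord_left (hc : (p.append q).IsCycle) (h : G.Adj v u)
    (hp : 2 ≤ p.length) (hq : 2 ≤ q.length) : (cons h.symm p).IsCycle := by
  have hpath := hc.isPath_append_left hq
  exact (cons_isCycle_iff p h.symm).2
    ⟨hpath, Sym2.eq_swap ▸ hpath.notMem_edges_of_two_le_length hp⟩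

lemma IsCycle.isCycle_cons_chord_right (hc : (p.append q).IsCycle) (h : G.Adj v u)
    (hp : 2 ≤ p.length) (hq : 2 ≤ q.length) : (cons h q).IsCycle := by
  have hpath := hc.isPath_append_right hp
  exact (cons_isCycle_iff q h).2
    ⟨hpath, Sym2.eq_swap ▸ hpath.notMem_edges_of_two_le_length hq⟩

end SimpleGraph.Walk

namespace Paper

open SimpleGraph Walk

variable {V : Type*} {G : SimpleGraph V} {u v : V} {p : G.Walk v u} {q : G.Walk u v}

lemma isThetaConfig_of_chord (hc : (p.append q).IsCycle) (h : G.Adj v u)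
    (hp : 2 ≤ p.length) (hq : 2 ≤ q.length) : IsThetaConfig G p h.toWalk q.reverse := by
  have hpath := hc.isPath_append_left hq
  have hqpath := hc.isPath_append_right hp
  have hedges : (p.edges ++ q.edges).Nodup := by simpa [edges_append] using hc.edges_nodup
  have htails : p.support.tail.Disjoint q.support.tail := by
    have := hc.support_nodup
    rw [tail_support_append, List.nodup_append'] at this
    exact this.2.2
  refine ⟨h.ne, hpath, by simp [h.ne], hqpath.reverse, ?_, ?_, ?_, ?_, ?_, ?_⟩
  · intro e he he'
    simp only [Adj.toWalk, edges_cons, edges_nil, List.mem_singleton] at he'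
    exact hpath.notMem_edges_of_two_le_length hp (he' ▸ he)
  · intro e he he'
    rw [edges_reverse, List.mem_reverse] at he'
    exact List.disjoint_of_nodup_append hedges he he'
  · intro e he he'
    simp only [Adj.toWalk, edges_cons, edges_nil, List.mem_singleton] at he
    rw [edges_reverse, List.mem_reverse, he, Sym2.eq_swap] at he'
    exact hqpath.notMem_edges_of_two_le_length hq he'
  · intro x _ hx
    simpa using hx
  · intro x hxp hxq
    rw [support_reverse, List.mem_reverse] at hxq
    rcases p.mem_support_iff.1 hxp with rfl | hxp'
    · exact .inl rfl
    rcases q.mem_support_iff.1 hxq with rfl | hxq'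
    · exact .inr rfl
    exact absurd hxq' (htails hxp')
  · intro x hx _
    simpa using hx

lemma ThetaProperty.append_mem_of_chord {B : Set (Set (Sym2 V))} (hB : ThetaProperty G B)
    (hc : (p.append q).IsCycle) (h : G.Adj v u) (hp : 2 ≤ p.length) (hq : 2 ≤ q.length)
    (hleft : walkEdges (cons h.symm p) ∈ B) (hright : walkEdges (cons h q) ∈ B) :
    walkEdges (p.append q) ∈ B := by
  have hleft_eq : walkEdges p ∪ walkEdges h.toWalk = walkEdges (cons h.symm p) := by
    ext e; simp [walkEdges, Sym2.eq_swap, or_comm]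
  have hright_eq : walkEdges h.toWalk ∪ walkEdges q.reverse = walkEdges (cons h q) := by
    ext e; simp [walkEdges]
  have hcycle_eq : walkEdges p ∪ walkEdges q.reverse = walkEdges (p.append q) := by
    ext e; simp [walkEdges]
  by_contra hbad
  exact hB p h.toWalk q.reverse (isThetaConfig_of_chord hc h hp hq)
    (.inr (.inl ⟨hleft_eq ▸ hleft, hcycle_eq ▸ hbad, hright_eq ▸ hright⟩))

variable {α β : Type*}

lemma even_length_of_loop_completeBipartiteGraph {x : α ⊕ β}
    (w : (completeBipartiteGraph α β).Walk x x) : Even w.length :=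
  ((CompleteBipartiteGraph.bicoloring α β).even_length_iff_congr w).2 Iff.rfl

lemma adj_of_odd_length_completeBipartiteGraph {x y : α ⊕ β}
    (w : (completeBipartiteGraph α β).Walk x y) (hw : Odd w.length) :
    (completeBipartiteGraph α β).Adj x y := by
  have : ¬x.isRight ↔ y.isRight :=
    ((CompleteBipartiteGraph.bicoloring α β).odd_length_iff_not_congr w).1 hw
  cases x <;> cases y <;> simp_all

lemma ncard_circVerts_walkEdges {x : V} {w : G.Walk x x} (hw : w.IsCycle) :
    (circVerts (walkEdges w)).ncard = w.length := by
  classical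
  have hverts : circVerts (walkEdges w) = w.support.tail.toFinset := by
    ext y
    rw [List.coe_toFinset, Set.mem_ofPred_eq, ← (w.mem_support_iff).trans
      (or_iff_right_of_imp fun hy => hy ▸ end_mem_tail_support hw.not_nil),
      mem_support_iff_exists_mem_edges_of_not_nil hw.not_nil]
    rfl
  rw [hverts, Set.ncard_coe_finset, List.toFinset_card_of_nodup hw.support_nodup,
    List.length_tail, length_support, Nat.add_sub_cancel]

/-- in a biased graph on a complete bipartite graph, if every circuit with
exactly 4 vertices is balanced then every circuit is balanced. -/
theorem statement17 {α β : Type} (B : Set (Set (Sym2 (α ⊕ β))))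
    (hB : IsBiased (completeBipartiteGraph α β) B)
    (h4 : ∀ C, IsCircuit (completeBipartiteGraph α β) C → (circVerts C).ncard = 4 → C ∈ B) :
    ∀ C, IsCircuit (completeBipartiteGraph α β) C → C ∈ B := by
  rintro C ⟨x, w, hw, rfl⟩
  induction hn : w.length using Nat.strong_induction_on generalizing x w with
  | _ n ih =>
  have hcirc4 {y : α ⊕ β} {c : (completeBipartiteGraph α β).Walk y y} (hc : c.IsCycle)
      (hlen : c.length = 4) : walkEdges c ∈ B :=
    h4 _ ⟨y, c, hc, rfl⟩ (by rw [ncard_circVerts_walkEdges hc, hlen])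
  obtain hw4 | hw6 : w.length = 4 ∨ 6 ≤ w.length := by
    have := hw.three_le_length
    obtain ⟨k, hk⟩ := even_length_of_loop_completeBipartiteGraph w
    omega
  · exact hcirc4 hw hw4
  obtain ⟨y, p, q, hp, rfl⟩ : ∃ (y : α ⊕ β) (p : (completeBipartiteGraph α β).Walk x y)
      (q : (completeBipartiteGraph α β).Walk y x), p.length = 3 ∧ p.append q = w :=
    ⟨_, w.take 3, w.drop 3, by rw [take_length]; omega, w.append_take_drop_eq 3⟩
  rw [length_append] at hw6 hn
  have h := adj_of_odd_length_completeBipartiteGraph p (by rw [hp]; decide)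
  refine hB.2.append_mem_of_chord hw h (by omega) (by omega) ?_ ?_
  · exact hcirc4 (hw.isCycle_cons_chord_left h (by omega) (by omega)) (by rw [length_cons, hp])
  · exact ih _ (by rw [length_cons]; omega) _ _
      (hw.isCycle_cons_chord_right h (by omega) (by omega)) rfl

end Paper
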